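/- The series ∑_{n=2}^∞ n^{−3/2} (∑_{k=1}^∞ min(n, 2^{4k})/k³)^{1/2} diverges (its partial sums tend to +∞). -/

import Mathlib

/-! For `n ≥ 2` put `K = ⌈log₂ n⌉`. The `K` inner terms with `K ≤ k < 2K` have
`min(n, 2^{4(k+1)}) = n` and denominator at most `(2K)³`, so the inner series is at least
`n / (8K²)` and the `n`-th outer term is at least `1 / (3nK)`. By Cauchy condensation,
`∑ 1 / (n ⌈log₂ n⌉)` diverges along with the harmonic series. -/

open Filter Finset

lemma tendsto_sum_Icc_atTop_of_not_summable {a : ℕ → ℝ} (ha : ∀ n, 0 ≤ a n)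
    (h : ¬ Summable a) (N : ℕ) : Tendsto (fun m => ∑ n ∈ Icc N m, a n) atTop atTop := by
  have hrange : Tendsto (fun m => ∑ n ∈ range (m + 1), a n) atTop atTop :=
    ((not_summable_iff_tendsto_nat_atTop_of_nonneg ha).mp h).comp (tendsto_add_atTop_nat 1)
  refine (tendsto_atTop_add_const_left atTop (-∑ n ∈ range N, a n) hrange).congr' ?_
  filter_upwards [eventually_ge_atTop N] with m hm
  rw [← sum_range_add_sum_Ico a (by omega : N ≤ m + 1), Ico_add_one_right_eq_Icc]
  ring

lemma not_summable_inv_mul_clog_two : ¬ Summable (fun n : ℕ => ((n : ℝ) * Nat.clog 2 n)⁻¹) := by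
  rw [← summable_condensed_iff_of_eventually_nonneg
    (Eventually.of_forall fun n => by positivity)]
  · have hcondensed (k : ℕ) :
        (2 : ℝ) ^ k * (((2 ^ k : ℕ) : ℝ) * Nat.clog 2 (2 ^ k))⁻¹ = (k : ℝ)⁻¹ := by
      rw [Nat.clog_pow 2 k one_lt_two, mul_inv, ← mul_assoc]
      push_cast
      rw [mul_inv_cancel₀ (by positivity), one_mul]
    simpa only [hcondensed] using Real.not_summable_natCast_inv
  · filter_upwards [eventually_ge_atTop 2] with n hn
    have hclog : 0 < Nat.clog 2 n := Nat.clog_pos one_lt_two hn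
    gcongr <;> omega

lemma summable_min_div_cube (n : ℕ) :
    Summable (fun k : ℕ => (min n (2 ^ (4 * (k + 1))) : ℝ) / ((k : ℝ) + 1) ^ 3) := by
  have hcube : Summable (fun k : ℕ => (n : ℝ) * (1 / ((k : ℝ) + 1) ^ 3)) := by
    refine Summable.mul_left _ ?_
    exact_mod_cast (summable_nat_add_iff 1).mpr
      (Real.summable_one_div_nat_pow.mpr (by norm_num))
  refine hcube.of_nonneg_of_le (fun k => by positivity) (fun k => ?_)
  rw [← div_eq_mul_one_div]
  gcongr
  exact min_le_left _ _

lemma div_le_tsum_min_div_cube {n K : ℕ} (hK : 0 < K) (hn : n ≤ 2 ^ K) :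
    (n : ℝ) / (8 * K ^ 2) ≤ ∑' k : ℕ, (min n (2 ^ (4 * (k + 1))) : ℝ) / ((k : ℝ) + 1) ^ 3 := by
  have hblock : ∀ k ∈ Ico K (2 * K),
      (n : ℝ) / (2 * K) ^ 3 ≤ (min n (2 ^ (4 * (k + 1))) : ℝ) / ((k : ℝ) + 1) ^ 3 := by
    intro k hk
    obtain ⟨hKk, hk2K⟩ := mem_Ico.mp hk
    have hmin : (min n (2 ^ (4 * (k + 1))) : ℝ) = n := by
      refine min_eq_left ?_
      exact_mod_cast hn.trans (Nat.pow_le_pow_right two_pos (by omega))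
    rw [hmin]
    gcongr
    exact_mod_cast hk2K
  calc (n : ℝ) / (8 * K ^ 2) = #(Ico K (2 * K)) • ((n : ℝ) / (2 * K) ^ 3) := by
        rw [Nat.card_Ico, nsmul_eq_mul]
        field_simp
        push_cast [show 2 * K - K = K by omega]
        ring
    _ ≤ ∑ k ∈ Ico K (2 * K), (min n (2 ^ (4 * (k + 1))) : ℝ) / ((k : ℝ) + 1) ^ 3 :=
        card_nsmul_le_sum _ _ _ hblock
    _ ≤ _ := (summable_min_div_cube n).sum_le_tsum _ fun k _ => by positivity

lemma inv_mul_clog_two_le {n : ℕ} (hn : 2 ≤ n) :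
    ((n : ℝ) * Nat.clog 2 n)⁻¹ ≤ 3 * ((n : ℝ) ^ (-(3 : ℝ) / 2) *
      Real.sqrt (∑' k : ℕ, (min n (2 ^ (4 * (k + 1))) : ℝ) / ((k : ℝ) + 1) ^ 3)) := by
  set K := Nat.clog 2 n
  have hK : 0 < K := Nat.clog_pos one_lt_two hn
  have hn0 : (0 : ℝ) < n := by positivity
  have hsqrt : Real.sqrt n / (3 * K) ≤
      Real.sqrt (∑' k : ℕ, (min n (2 ^ (4 * (k + 1))) : ℝ) / ((k : ℝ) + 1) ^ 3) := by
    calc Real.sqrt n / (3 * K) = Real.sqrt ((n : ℝ) / (9 * K ^ 2)) := by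
          rw [Real.sqrt_div' _ (by positivity), show (9 : ℝ) * K ^ 2 = (3 * K) ^ 2 by ring,
            Real.sqrt_sq (by positivity)]
      _ ≤ Real.sqrt ((n : ℝ) / (8 * K ^ 2)) := by gcongr; norm_num
      _ ≤ _ := Real.sqrt_le_sqrt (div_le_tsum_min_div_cube hK (Nat.le_pow_clog one_lt_two n))
  have hpow : (n : ℝ) ^ (-(3 : ℝ) / 2) * Real.sqrt n = (n : ℝ)⁻¹ := by
    rw [Real.sqrt_eq_rpow, ← Real.rpow_add hn0, show -(3 : ℝ) / 2 + 1 / 2 = -1 by norm_num,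
      Real.rpow_neg_one]
  calc ((n : ℝ) * K)⁻¹ = 3 * ((n : ℝ) ^ (-(3 : ℝ) / 2) * (Real.sqrt n / (3 * K))) := by
        rw [← mul_div_assoc, hpow]
        field_simp
    _ ≤ _ := by gcongr

/-- The series `∑_{n=2}^∞ n^{-3/2} (∑_{k=1}^∞ min(n, 2^{4k})/k³)^{1/2}` diverges:
its partial sums tend to `+∞`. -/
theorem stmt_16 :
    Tendsto (fun m : ℕ =>
        ∑ n ∈ Finset.Icc 2 m, (n : ℝ) ^ (-(3 : ℝ) / 2) *
          Real.sqrt (∑' k : ℕ, (min n (2 ^ (4 * (k + 1))) : ℝ) / ((k : ℝ) + 1) ^ 3))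
      atTop atTop := by
  refine tendsto_sum_Icc_atTop_of_not_summable (fun n => by positivity) (fun hsum => ?_) 2
  refine not_summable_inv_mul_clog_two ((hsum.mul_left 3).of_norm_bounded_eventually_nat ?_)
  filter_upwards [eventually_ge_atTop 2] with n hn
  rw [Real.norm_of_nonneg (by positivity)]
  exact inv_mul_clog_two_le hn
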